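/- Let u : ℝ^k → ℝ be defined by u(x) = Σ_{i ∈ [k]} max(xᵢ − Σ_{j ∈ [k]} e_{i,j} xⱼ, 0) where e_{i,j} ∈ {0,1}, and let h(σ) = max(‖σ‖_∞ − 1/k, 0) on the simplex Δ^k. If u satisfies u(t·x) = t·u(x) for t > 0 and u(x) ≤ 1 on [0,1]^k, then max_{σ ∈ Δ^k} (u(σ) − h(σ)) = (1/k) · max_{x ∈ [0,1]^k} u(x). -/
import Mathlib

theorem stmt_7 (k : ℕ) (hk : 0 < k)
    (e : Fin k → Fin k → ℝ) (he : ∀ i j, e i j = 0 ∨ e i j = 1)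
    (u : (Fin k → ℝ) → ℝ)
    (hu : ∀ x, u x = ∑ i, max (x i - ∑ j, e i j * x j) 0)
    (hbound : ∀ x ∈ Set.Icc (0 : Fin k → ℝ) 1, u x ≤ 1) :
    sSup ((fun σ => u σ - max (‖σ‖ - 1 / (k : ℝ)) 0) '' stdSimplex ℝ (Fin k))
      = (1 / (k : ℝ)) * sSup (u '' Set.Icc (0 : Fin k → ℝ) 1) := by
  have hk0 : (0:ℝ) < k := by exact_mod_cast hk
  have hk1 : (1:ℝ) ≤ k := by exact_mod_cast hk
  have hen : ∀ i j, 0 ≤ e i j := fun i j => by rcases he i j with h | h <;> simp [h]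
  have hu0 : ∀ x, 0 ≤ u x := by
    intro x; rw [hu]; exact Finset.sum_nonneg fun i _ => le_max_right _ _
  -- simplex ⊆ cube
  have hsub : ∀ σ ∈ stdSimplex ℝ (Fin k), σ ∈ Set.Icc (0 : Fin k → ℝ) 1 := by
    intro σ hσ
    obtain ⟨h1, h2⟩ := hσ
    refine ⟨fun i => h1 i, fun i => ?_⟩
    calc σ i ≤ ∑ j, σ j := Finset.single_le_sum (fun j _ => h1 j) (Finset.mem_univ i)
      _ = 1 := h2
  -- homogeneity
  have hhom : ∀ (c : ℝ) (x : Fin k → ℝ), 0 ≤ c → u (c • x) = c * u x := by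
    intro c x hc
    rw [hu, hu, Finset.mul_sum]
    refine Finset.sum_congr rfl fun i _ => ?_
    have h1 : (c • x) i - ∑ j, e i j * (c • x) j = c * (x i - ∑ j, e i j * x j) := by
      simp only [Pi.smul_apply, smul_eq_mul, mul_sub, Finset.mul_sum]
      congr 1
      exact Finset.sum_congr rfl fun j _ => by ring
    rw [h1, mul_max_of_nonneg _ _ hc, mul_zero]
  -- norm lower bound on simplex
  have hnorm_lb : ∀ σ ∈ stdSimplex ℝ (Fin k), 1 / (k:ℝ) ≤ ‖σ‖ := by
    intro σ hσ
    obtain ⟨h1, h2⟩ := hσ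
    rw [div_le_iff₀ hk0]
    have : (1:ℝ) ≤ ∑ _j : Fin k, ‖σ‖ := by
      rw [← h2]
      refine Finset.sum_le_sum fun j _ => ?_
      calc σ j ≤ |σ j| := le_abs_self _
        _ = ‖σ j‖ := rfl
        _ ≤ ‖σ‖ := norm_le_pi_norm σ j
    simpa [Finset.sum_const, Finset.card_univ, mul_comm] using this
  -- u σ ≤ ‖σ‖ on simplex
  have hule : ∀ σ ∈ stdSimplex ℝ (Fin k), u σ ≤ ‖σ‖ := by
    intro σ hσ
    have hm : (0:ℝ) < ‖σ‖ := lt_of_lt_of_le (by positivity) (hnorm_lb σ hσ)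
    have hy : (‖σ‖⁻¹ • σ) ∈ Set.Icc (0 : Fin k → ℝ) 1 := by
      constructor
      · intro i
        have := hσ.1 i
        simp only [Pi.smul_apply, smul_eq_mul, Pi.zero_apply]
        positivity
      · intro i
        simp only [Pi.smul_apply, smul_eq_mul, Pi.one_apply]
        rw [inv_mul_le_iff₀ hm, mul_one]
        calc σ i ≤ |σ i| := le_abs_self _
          _ ≤ ‖σ‖ := norm_le_pi_norm σ i
    have : u σ = ‖σ‖ * u (‖σ‖⁻¹ • σ) := by
      rw [← hhom _ _ (le_of_lt hm), smul_smul, mul_inv_cancel₀ (ne_of_gt hm), one_smul]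
    rw [this]
    calc ‖σ‖ * u (‖σ‖⁻¹ • σ) ≤ ‖σ‖ * 1 := by
          exact mul_le_mul_of_nonneg_left (hbound _ hy) (le_of_lt hm)
      _ = ‖σ‖ := mul_one _
  -- upper bound on simplex values
  have hub : ∀ σ ∈ stdSimplex ℝ (Fin k), u σ - max (‖σ‖ - 1 / (k : ℝ)) 0 ≤ 1 / (k:ℝ) := by
    intro σ hσ
    have h1 := hnorm_lb σ hσ
    have h2 : max (‖σ‖ - 1 / (k : ℝ)) 0 = ‖σ‖ - 1 / (k:ℝ) := max_eq_left (by linarith)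
    rw [h2]
    have := hule σ hσ
    linarith
  by_cases hpos : ∃ x ∈ Set.Icc (0 : Fin k → ℝ) 1, 0 < u x
  · -- M = 1 case
    obtain ⟨x, hx, hxu⟩ := hpos
    -- find i₀ with positive term
    have : ∃ i₀ : Fin k, 0 < x i₀ - ∑ j, e i₀ j * x j := by
      by_contra hcon
      push_neg at hcon
      have : u x ≤ 0 := by
        rw [hu]
        refine le_of_eq (Finset.sum_eq_zero fun i _ => ?_)
        exact max_eq_right (hcon i)
      linarith
    obtain ⟨i₀, hi₀⟩ := this
    have hei : e i₀ i₀ = 0 := by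
      rcases he i₀ i₀ with h | h
      · exact h
      · exfalso
        have : x i₀ ≤ ∑ j, e i₀ j * x j := by
          have hle : e i₀ i₀ * x i₀ ≤ ∑ j, e i₀ j * x j :=
            Finset.single_le_sum (fun j _ => mul_nonneg (hen i₀ j) (hx.1 j)) (Finset.mem_univ i₀)
          rw [h, one_mul] at hle
          exact hle
        linarith
    set δ : Fin k → ℝ := Pi.single i₀ 1 with hδ
    have hδsum : ∀ i, ∑ j, e i j * δ j = e i i₀ := by
      intro i
      simp [hδ, Pi.single_apply, mul_ite]
    have hδmem : δ ∈ stdSimplex ℝ (Fin k) := by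
      constructor
      · intro i
        simp [hδ, Pi.single_apply]
        split <;> norm_num
      · simp [hδ, Pi.single_apply]
    have huδ : u δ = 1 := by
      rw [hu]
      rw [Finset.sum_eq_single i₀]
      · rw [hδsum i₀, hei]
        simp [hδ, Pi.single_apply]
      · intro i _ hne
        rw [hδsum i]
        have : δ i = 0 := by simp [hδ, Pi.single_apply, hne]
        rw [this]
        exact max_eq_right (by have := hen i i₀; linarith)
      · intro h; exact absurd (Finset.mem_univ i₀) h
    have hδnorm : ‖δ‖ = 1 := by
      apply le_antisymm
      · apply pi_norm_le_iff_of_nonneg zero_le_one |>.2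
        intro i
        simp only [hδ, Pi.single_apply, Real.norm_eq_abs]
        split <;> simp
      · calc (1:ℝ) = ‖δ i₀‖ := by simp [hδ]
          _ ≤ ‖δ‖ := norm_le_pi_norm δ i₀
    have hδcube : δ ∈ Set.Icc (0 : Fin k → ℝ) 1 := hsub δ hδmem
    have hR : sSup (u '' Set.Icc (0 : Fin k → ℝ) 1) = 1 := by
      apply IsGreatest.csSup_eq
      constructor
      · exact ⟨δ, hδcube, huδ⟩
      · rintro y ⟨z, hz, rfl⟩
        exact hbound z hz
    have hL : sSup ((fun σ => u σ - max (‖σ‖ - 1 / (k : ℝ)) 0) '' stdSimplex ℝ (Fin k))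
        = 1 / (k:ℝ) := by
      apply IsGreatest.csSup_eq
      constructor
      · refine ⟨δ, hδmem, ?_⟩
        show u δ - max (‖δ‖ - 1 / (k : ℝ)) 0 = 1 / (k:ℝ)
        rw [huδ, hδnorm]
        have : max (1 - 1 / (k:ℝ)) 0 = 1 - 1/(k:ℝ) := max_eq_left (by
          have : 1/(k:ℝ) ≤ 1 := by
            rw [div_le_one hk0]; exact hk1
          linarith)
        rw [this]; ring
      · rintro y ⟨σ, hσ, rfl⟩
        exact hub σ hσ
    rw [hL, hR, mul_one]
  · -- M = 0 case
    push_neg at hpos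
    have huz : ∀ x ∈ Set.Icc (0 : Fin k → ℝ) 1, u x = 0 :=
      fun x hx => le_antisymm (hpos x hx) (hu0 x)
    have h0cube : (0 : Fin k → ℝ) ∈ Set.Icc (0 : Fin k → ℝ) 1 :=
      ⟨le_refl _, fun i => by norm_num⟩
    have hR : sSup (u '' Set.Icc (0 : Fin k → ℝ) 1) = 0 := by
      apply IsGreatest.csSup_eq
      constructor
      · exact ⟨0, h0cube, huz 0 h0cube⟩
      · rintro y ⟨z, hz, rfl⟩
        exact hpos z hz
    set w : Fin k → ℝ := fun _ => 1/(k:ℝ) with hw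
    have hwmem : w ∈ stdSimplex ℝ (Fin k) := by
      constructor
      · intro i; positivity
      · simp [hw, Finset.sum_const, Finset.card_univ]
        field_simp
    haveI : Nonempty (Fin k) := ⟨⟨0, hk⟩⟩
    have hwnorm : ‖w‖ = 1/(k:ℝ) := by
      rw [hw]
      rw [pi_norm_const]
      rw [Real.norm_eq_abs, abs_of_nonneg (by positivity)]
    have hL : sSup ((fun σ => u σ - max (‖σ‖ - 1 / (k : ℝ)) 0) '' stdSimplex ℝ (Fin k))
        = 0 := by
      apply IsGreatest.csSup_eq
      constructor
      · refine ⟨w, hwmem, ?_⟩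
        show u w - max (‖w‖ - 1 / (k : ℝ)) 0 = 0
        rw [huz w (hsub w hwmem), hwnorm]
        simp
      · rintro y ⟨σ, hσ, rfl⟩
        have h1 := huz σ (hsub σ hσ)
        have h2 : (0:ℝ) ≤ max (‖σ‖ - 1 / (k : ℝ)) 0 := le_max_right _ _
        simp only
        linarith
    rw [hL, hR, mul_zero]
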